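/- For a one-hidden-layer ReLU network as above, if x satisfies oⱼ·(Wⱼᵀx + bⱼ) > 0 for all j (strict activation pattern) with all Wⱼ ≠ 0, then the open Euclidean ball around x of radius min_j |Wⱼᵀx + bⱼ|/‖Wⱼ‖₂ is contained in S = {x̄ : oⱼ(Wⱼᵀx̄ + bⱼ) ≥ 0 ∀j}, and hence the network is affine on this ball. -/

import Mathlib

/-! A point `x'` within distance `|⟪w, x⟫ + c| / ‖w‖` of `x` moves the affine function
`⟪w, ·⟫ + c` by less than its value at `x` (Cauchy–Schwarz), so the pre-activation keeps its
sign. Each neuron therefore keeps its activation pattern on the ball, where ReLU acts as the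
identity or as zero. -/

open scoped RealInnerProductSpace

lemma mul_pos_of_abs_sub_lt_abs {a a' : ℝ} (h : |a' - a| < |a|) : 0 < a * a' := by
  have hle : -(a * (a' - a)) ≤ |a| * |a' - a| := by
    rw [← abs_mul]; exact neg_le_abs _
  nlinarith [abs_mul_abs_self a, abs_nonneg (a' - a)]

lemma mul_pos_of_mul_pos_of_abs_sub_lt_abs {o a a' : ℝ} (hoa : 0 < o * a)
    (h : |a' - a| < |a|) : 0 < o * a' := by
  have haa' := mul_pos_of_abs_sub_lt_abs h
  have : 0 < o * a' * (a * a) := by nlinarith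
  exact pos_of_mul_pos_left this (mul_self_nonneg a)

lemma abs_inner_add_sub_lt_of_dist_lt {E : Type*} [NormedAddCommGroup E]
    [InnerProductSpace ℝ E] {w x x' : E} {c : ℝ} (h : dist x' x < |⟪w, x⟫ + c| / ‖w‖) :
    |(⟪w, x'⟫ + c) - (⟪w, x⟫ + c)| < |⟪w, x⟫ + c| := by
  rcases (norm_nonneg w).eq_or_lt with hw | hw
  · rw [← hw, div_zero] at h
    exact absurd h (dist_nonneg.not_gt)
  calc |(⟪w, x'⟫ + c) - (⟪w, x⟫ + c)| = |⟪w, x' - x⟫| := by rw [inner_sub_right]; ring_nf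
    _ ≤ ‖w‖ * dist x' x := by rw [dist_eq_norm]; exact abs_real_inner_le_norm _ _
    _ < |⟪w, x⟫ + c| := by rwa [← lt_div_iff₀' hw]

lemma mul_max_zero_eq_ite_of_sign {o z : ℝ} (v : ℝ) (ho : o = 1 ∨ o = -1) (h : 0 < o * z) :
    v * max 0 z = if o = 1 then v * z else 0 := by
  rcases ho with rfl | rfl
  · rw [if_pos rfl, max_eq_right (by linarith)]
  · rw [if_neg (by norm_num), max_eq_left (by linarith), mul_zero]

theorem stmt16_general {D N : ℕ} (hN : 0 < N)
    (W : Fin N → EuclideanSpace ℝ (Fin D)) (b : Fin N → ℝ)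
    (V : Fin N → ℝ) (d : ℝ)
    (o : Fin N → ℝ) (ho : ∀ j, o j = 1 ∨ o j = -1)
    (x : EuclideanSpace ℝ (Fin D))
    (hstrict : ∀ j, 0 < o j * (⟪W j, x⟫ + b j)) :
    Metric.ball x (Finset.univ.inf'
        (Finset.univ_nonempty_iff.mpr (Fin.pos_iff_nonempty.mp hN))
        (fun j => |⟪W j, x⟫ + b j| / ‖W j‖))
      ⊆ {x' | ∀ j, 0 ≤ o j * (⟪W j, x'⟫ + b j)} ∧
    ∀ x' ∈ Metric.ball x (Finset.univ.inf'
        (Finset.univ_nonempty_iff.mpr (Fin.pos_iff_nonempty.mp hN))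
        (fun j => |⟪W j, x⟫ + b j| / ‖W j‖)),
      (∑ j, V j * max 0 (⟪W j, x'⟫ + b j)) + d
        = (∑ j, if o j = 1 then V j * (⟪W j, x'⟫ + b j) else 0) + d := by
  have hpattern : ∀ x' ∈ Metric.ball x (Finset.univ.inf'
        (Finset.univ_nonempty_iff.mpr (Fin.pos_iff_nonempty.mp hN))
        (fun j => |⟪W j, x⟫ + b j| / ‖W j‖)), ∀ j, 0 < o j * (⟪W j, x'⟫ + b j) :=
    fun x' hx' j => mul_pos_of_mul_pos_of_abs_sub_lt_abs (hstrict j)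
      (abs_inner_add_sub_lt_of_dist_lt
        ((Metric.mem_ball.mp hx').trans_le (Finset.inf'_le _ (Finset.mem_univ j))))
  refine ⟨fun x' hx' j => (hpattern x' hx' j).le, fun x' hx' => ?_⟩
  congr 1
  exact Finset.sum_congr rfl fun j _ =>
    mul_max_zero_eq_ite_of_sign (V j) (ho j) (hpattern x' hx' j)

/-- Strict activation pattern: the open ℓ2 ball of radius
`min_j |⟪W j, x⟫ + b j| / ‖W j‖` around `x` lies in the feasible set of the
pattern, and the one-hidden-layer ReLU network is affine on this ball. -/
theorem stmt16 {D N : ℕ} (hN : 0 < N)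
    (W : Fin N → EuclideanSpace ℝ (Fin D)) (b : Fin N → ℝ)
    (V : Fin N → ℝ) (d : ℝ)
    (o : Fin N → ℝ) (ho : ∀ j, o j = 1 ∨ o j = -1)
    (x : EuclideanSpace ℝ (Fin D))
    (hstrict : ∀ j, 0 < o j * (⟪W j, x⟫ + b j)) (hW : ∀ j, W j ≠ 0) :
    Metric.ball x (Finset.univ.inf'
        (Finset.univ_nonempty_iff.mpr (Fin.pos_iff_nonempty.mp hN))
        (fun j => |⟪W j, x⟫ + b j| / ‖W j‖))
      ⊆ {x' | ∀ j, 0 ≤ o j * (⟪W j, x'⟫ + b j)} ∧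
    ∀ x' ∈ Metric.ball x (Finset.univ.inf'
        (Finset.univ_nonempty_iff.mpr (Fin.pos_iff_nonempty.mp hN))
        (fun j => |⟪W j, x⟫ + b j| / ‖W j‖)),
      (∑ j, V j * max 0 (⟪W j, x'⟫ + b j)) + d
        = (∑ j, if o j = 1 then V j * (⟪W j, x'⟫ + b j) else 0) + d :=
  stmt16_general hN W b V d o ho x hstrict
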